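/- Let H be a real Hilbert space with inner product ⟨·,·⟩, K ⊆ H nonempty closed convex, a a bounded coercive bilinear form, and f ∈ H'. Suppose (u_ε) ⊆ H is a net with u_ε ⇀ u weakly in H, u ∈ K, and a(u_ε, v − u_ε) ≥ f(v − u_ε) for all v ∈ K and all ε. Then u solves the variational inequality a(u, v−u) ≥ f(v−u) for all v ∈ K. -/
import Mathlib


open scoped RealInnerProductSpace

/-- Weak limits of (approximate) solutions solve the variational inequality. -/
theorem vi_weak_limit {H : Type*} [NormedAddCommGroup H] [InnerProductSpace ℝ H]
    [CompleteSpace H] {ι : Type*} (l : Filter ι) [l.NeBot]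
    (a : H →L[ℝ] H →L[ℝ] ℝ) (aplus : ℝ) (haplus : 0 < aplus)
    (hcoer : ∀ v : H, aplus * ‖v‖ ^ 2 ≤ a v v)
    (K : Set H) (hK : K.Nonempty) (hKc : IsClosed K) (hKconv : Convex ℝ K)
    (f : H →L[ℝ] ℝ) (u_ : ι → H) (u : H) (hu : u ∈ K)
    (hweak : ∀ w : H, Filter.Tendsto (fun i => ⟪u_ i, w⟫) l (nhds ⟪u, w⟫))
    (hVI : ∀ i, ∀ v ∈ K, f (v - u_ i) ≤ a (u_ i) (v - u_ i)) :
    ∀ v ∈ K, f (v - u) ≤ a u (v - u) := by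
  -- weak convergence tested against any continuous linear functional
  have hφ : ∀ φ : H →L[ℝ] ℝ,
      Filter.Tendsto (fun i => φ (u_ i)) l (nhds (φ u)) := by
    intro φ
    set z := (InnerProductSpace.toDual ℝ H).symm φ with hz
    have hzx : ∀ x : H, φ x = ⟪x, z⟫ := by
      intro x
      rw [real_inner_comm]
      exact (InnerProductSpace.toDual_symm_apply).symm
    simpa only [hzx] using hweak z
  intro v hv
  -- pointwise bound using coercivity
  have key : ∀ i, f (v - u_ i) ≤
      a.flip v (u_ i) - a u (u_ i) - a.flip u (u_ i) + a u u := by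
    intro i
    refine (hVI i v hv).trans ?_
    have h0 : (0 : ℝ) ≤ a (u_ i - u) (u_ i - u) := by
      refine le_trans ?_ (hcoer (u_ i - u))
      positivity
    have hexp : a (u_ i - u) (u_ i - u)
        = a (u_ i) (u_ i) - a (u_ i) u - a u (u_ i) + a u u := by
      simp [map_sub, ContinuousLinearMap.sub_apply]
      ring
    have h1 : a u (u_ i) + a (u_ i) u - a u u ≤ a (u_ i) (u_ i) := by
      nlinarith [h0, hexp]
    have h2 : a (u_ i) (v - u_ i) = a (u_ i) v - a (u_ i) (u_ i) := by
      simp [map_sub]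
    simp only [ContinuousLinearMap.flip_apply]
    linarith
  -- limits of both sides
  have hL : Filter.Tendsto (fun i => f (v - u_ i)) l (nhds (f (v - u))) := by
    have := (hφ f).const_sub (f v)
    simpa [map_sub] using this
  have hR : Filter.Tendsto
      (fun i => a.flip v (u_ i) - a u (u_ i) - a.flip u (u_ i) + a u u) l
      (nhds (a.flip v u - a u u - a.flip u u + a u u)) := by
    exact (((hφ (a.flip v)).sub (hφ (a u))).sub (hφ (a.flip u))).add tendsto_const_nhds
  have hlim := le_of_tendsto_of_tendsto' hL hR key
  simp only [ContinuousLinearMap.flip_apply] at hlim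
  have : a u (v - u) = a u v - a u u := by simp [map_sub]
  linarith
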